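/- Let I be an operation instance, let k ≥ 1, and let t_1 ≤ t_2 ≤ ⋯ ≤ t_k be real times with e(I) < t_1 such that for every j with 1 ≤ j ≤ k−1 and every process p there exists a time u with t_j ≤ u ≤ t_{j+1} at which p is quiescent. Then every instance Z that is reachable from I in the contention graph with graph distance at most k−1 satisfies e(Z) < t_k (i.e., every instance at most distance k−1 from I in the contention graph ends before the k-th time t_k). -/

import Mathlib

/-- The contention graph on operation instances with start times `s` and end
times `e`: two distinct instances are adjacent iff they overlap (neither ends
before the other starts). -/
def contentionGraph {ι : Type*} (s e : ι → ℝ) : SimpleGraph ι where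
  Adj a b := a ≠ b ∧ s b ≤ e a ∧ s a ≤ e b
  symm := by
    constructor
    intro a b h
    exact ⟨h.1.symm, h.2.2, h.2.1⟩
  loopless := by
    constructor
    intro a h
    exact h.1 rfl

/-!
If every process is quiescent somewhere in `[t j, t (j+1)]`, then an instance overlapping one
that ended before `t j` has started before the quiescent moment `u` of its own process, so it
cannot still be running at `u` and ends before `t (j+1)`. Along a walk of length `d` from `I`
this pushes the end-time bound from `t 1` to `t (1 + d)`, and `t` is monotone up to `k`.
-/

namespace contentionGraph

variable {ι Pr : Type*} {s e : ι → ℝ}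

theorem end_lt_of_adj_of_not_active {a c : ι} {u : ℝ} (hac : (contentionGraph s e).Adj a c)
    (hau : e a ≤ u) (hc : ¬ (s c ≤ u ∧ u ≤ e c)) : e c < u :=
  not_le.mp fun hcu ↦ hc ⟨hac.2.1.trans hau, hcu⟩

theorem end_lt_of_walk (π : ι → Pr) {t : ℕ → ℝ} {n : ℕ} :
    ∀ {a b : ι} (w : (contentionGraph s e).Walk a b) (m : ℕ),
      (∀ j, m ≤ j → j < n → ∀ p : Pr,
        ∃ u, t j ≤ u ∧ u ≤ t (j + 1) ∧ ∀ i, π i = p → ¬ (s i ≤ u ∧ u ≤ e i)) →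
      m + w.length ≤ n → e a < t m → e b < t (m + w.length)
  | _, _, .nil, _, _, _, ha => ha
  | _, _, .cons hac w, m, hq, hlen, ha => by
    rw [SimpleGraph.Walk.length_cons] at hlen ⊢
    obtain ⟨u, hmu, hu, hquiet⟩ := hq m le_rfl (by omega) (π _)
    have hc : e _ < t (m + 1) :=
      (end_lt_of_adj_of_not_active hac (ha.le.trans hmu) (hquiet _ rfl)).trans_le hu
    rw [← add_assoc, add_right_comm]
    exact end_lt_of_walk π w (m + 1) (fun j hj ↦ hq j (by omega)) (by omega) hc

end contentionGraph

theorem every_instance_within_distance_ends_before_general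
    {ι Pr : Type*} (s e : ι → ℝ) (π : ι → Pr)
    (I : ι) (k : ℕ) (hk : 1 ≤ k) (t : ℕ → ℝ)
    (hmono : ∀ j, 1 ≤ j → j < k → t j ≤ t (j + 1))
    (h1 : e I < t 1)
    (hq : ∀ j, 1 ≤ j → j ≤ k - 1 → ∀ p : Pr,
      ∃ u, t j ≤ u ∧ u ≤ t (j + 1) ∧ ∀ i, π i = p → ¬ (s i ≤ u ∧ u ≤ e i))
    (Z : ι) (w : (contentionGraph s e).Walk I Z) (hw : w.length ≤ k - 1) :
    e Z < t k := by
  have hZ : e Z < t (1 + w.length) :=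
    contentionGraph.end_lt_of_walk π (n := k) w 1 (fun j hj hjk ↦ hq j hj (by omega)) (by omega) h1
  have ht : MonotoneOn t (Set.Icc 1 k) :=
    monotoneOn_of_le_succ Set.ordConnected_Icc fun j _ hj hj1 ↦ by
      rw [Order.succ_eq_add_one] at hj1 ⊢
      exact hmono j hj.1 hj1.2
  exact hZ.trans_le (ht ⟨le_add_right le_rfl, by omega⟩ ⟨hk, le_rfl⟩ (by omega))

/-- If `e I < t 1 ≤ t 2 ≤ ⋯ ≤ t k` and, for each `1 ≤ j ≤ k-1`, every process
is quiescent at some time in `[t j, t (j+1)]`, then every instance `Z` within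
graph distance `k-1` of `I` in the contention graph ends before `t k`. -/
theorem every_instance_within_distance_ends_before
    {ι Pr : Type*} (s e : ι → ℝ) (π : ι → Pr)
    (hse : ∀ i, s i ≤ e i)
    (I : ι) (k : ℕ) (hk : 1 ≤ k) (t : ℕ → ℝ)
    (hmono : ∀ j, 1 ≤ j → j < k → t j ≤ t (j + 1))
    (h1 : e I < t 1)
    (hq : ∀ j, 1 ≤ j → j ≤ k - 1 → ∀ p : Pr,
      ∃ u, t j ≤ u ∧ u ≤ t (j + 1) ∧ ∀ i, π i = p → ¬ (s i ≤ u ∧ u ≤ e i))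
    (Z : ι) (w : (contentionGraph s e).Walk I Z) (hw : w.length ≤ k - 1) :
    e Z < t k :=
  every_instance_within_distance_ends_before_general s e π I k hk t hmono h1 hq Z w hw
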